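/- Let E be a real Banach space, T ∈ (0,∞], a < 0 < b, Ω := {(t,y) ∈ ℝ×E : |t| < T, ‖y‖ < b}, Ω̃ := (−T,T)×(a,b). Let f : Ω → E satisfy hypothesis (LC) and let g : Ω̃ → ℝ satisfy hypothesis (MJ) with respect to f. Fix x ∈ E with ‖x‖ < b, let 0 < β̃ ≤ T, and suppose ψ : [0,β̃) → ℝ is differentiable with ψ(0) = ‖x‖, ψ(t) ∈ [0,b) and ψ'(t) = g(t,ψ(t)) for all t ∈ [0,β̃). Then there exists a differentiable function φ : [0,β̃) → E with φ(0) = x, ‖φ(t)‖ < b, φ'(t) = f(t,φ(t)) and ‖φ(t)‖ ≤ ψ(t) for every t ∈ [0,β̃). -/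

import Mathlib

/-!
Being Lipschitz on compact sets, `f` is uniformly Lipschitz on a box around each point of `Ω`
(even when `E` is infinite-dimensional), so Picard–Lindelöf gives local solutions; they are
unique and glue to a solution `φ` on a maximal interval `[0, σ)`. There `‖φ‖ ≤ ψ`, because `‖φ‖`
cannot cross the fence `ψ + ε exp (K t)` once `K` exceeds a Lipschitz constant of `g`. As `g` is
monotone, `‖φ'‖ ≤ g t ‖φ‖ ≤ g t ψ = ψ'`, so `‖φ t - φ s‖ ≤ ψ t - ψ s`: if `σ < β̃`, then `φ`
converges at `σ` to a point of `Ω`, and Picard–Lindelöf near that point continues `φ` beyond `σ`.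
-/

open Set Metric Filter Topology Function Real
open scoped NNReal

section LipschitzInSnd

variable {F G : Type*} [NormedAddCommGroup F] [NormedAddCommGroup G]

def LipschitzInSndOnCompacts (f : ℝ → F → G) (U : Set (ℝ × F)) : Prop :=
  ∀ K : Set (ℝ × F), IsCompact K → K ⊆ U →
    ∃ C : ℝ, ∀ p ∈ K, ∀ q ∈ K, p.1 = q.1 → ‖f p.1 p.2 - f q.1 q.2‖ ≤ C * ‖p.2 - q.2‖

namespace LipschitzInSndOnCompacts

variable {f : ℝ → F → G} {U : Set (ℝ × F)}

theorem exists_forall_norm_sub_le (hf : LipschitzInSndOnCompacts f U) {s : Set ℝ}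
    (hs : IsCompact s) {u v : ℝ → F} (hu : ContinuousOn u s) (hv : ContinuousOn v s)
    (huU : ∀ t ∈ s, (t, u t) ∈ U) (hvU : ∀ t ∈ s, (t, v t) ∈ U) :
    ∃ C : ℝ, ∀ t ∈ s, ‖f t (u t) - f t (v t)‖ ≤ C * ‖u t - v t‖ := by
  obtain ⟨C, hC⟩ := hf ((fun t => (t, u t)) '' s ∪ (fun t => (t, v t)) '' s)
    ((hs.image_of_continuousOn (continuousOn_id.prodMk hu)).union
      (hs.image_of_continuousOn (continuousOn_id.prodMk hv)))
    (union_subset (image_subset_iff.2 huU) (image_subset_iff.2 hvU))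
  exact ⟨C, fun t ht => hC _ (Or.inl ⟨t, ht, rfl⟩) _ (Or.inr ⟨t, ht, rfl⟩) rfl⟩

theorem exists_lipschitzOnWith_closedBall (hf : LipschitzInSndOnCompacts f U) {t₀ : ℝ} {x₀ : F}
    (hU : U ∈ 𝓝 (t₀, x₀)) :
    ∃ r > 0, ∃ L : ℝ≥0, ∀ t ∈ closedBall t₀ r, LipschitzOnWith L (f t) (closedBall x₀ r) := by
  obtain ⟨r₀, hr₀, hr₀U⟩ := nhds_basis_closedBall.mem_iff.1 hU
  by_contra! h
  obtain ⟨r, -, hr, hr_lim⟩ := exists_seq_strictAnti_tendsto' hr₀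
  have hbad : ∀ n : ℕ, ∃ t ∈ closedBall t₀ (r n), ∃ y ∈ closedBall x₀ (r n),
      ∃ y' ∈ closedBall x₀ (r n), n * ‖y - y'‖ < ‖f t y - f t y'‖ := by
    intro n
    obtain ⟨t, ht, hL⟩ := h (r n) (hr n).1 n
    simp only [lipschitzOnWith_iff_norm_sub_le, not_forall, not_le] at hL
    obtain ⟨y, hy, y', hy', hlt⟩ := hL
    exact ⟨t, ht, y, hy, y', hy', by simpa using hlt⟩
  choose t ht y hy y' hy' hlt using hbad
  -- the bad pairs accumulate at `(t₀, x₀)`, so together with it they form a compact set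
  have hK : ∀ z : ℕ → F, (∀ n, z n ∈ closedBall x₀ (r n)) →
      IsCompact (insert (t₀, x₀) (range fun n => (t n, z n))) ∧
        insert (t₀, x₀) (range fun n => (t n, z n)) ⊆ U := by
    intro z hz
    have hmem : ∀ n, (t n, z n) ∈ closedBall (t₀, x₀) (r n) := fun n => by
      rw [← closedBall_prod_same]; exact ⟨ht n, hz n⟩
    refine ⟨Tendsto.isCompact_insert_range (tendsto_iff_dist_tendsto_zero.2
        (squeeze_zero (fun _ => dist_nonneg) hmem hr_lim)),
      insert_subset (hr₀U (mem_closedBall_self hr₀.le)) (range_subset_iff.2 fun n => ?_)⟩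
    exact hr₀U (closedBall_subset_closedBall (hr n).2.le (hmem n))
  obtain ⟨C, hC⟩ := hf _ ((hK y hy).1.union (hK y' hy').1) (union_subset (hK y hy).2 (hK y' hy').2)
  obtain ⟨n, hn⟩ := exists_nat_gt C
  have := hC _ (Or.inl (mem_insert_of_mem _ ⟨n, rfl⟩)) _ (Or.inr (mem_insert_of_mem _ ⟨n, rfl⟩)) rfl
  exact (hlt n).not_ge (this.trans (mul_le_mul_of_nonneg_right hn.le (norm_nonneg _)))

end LipschitzInSndOnCompacts

end LipschitzInSnd

/-- The domain `Ω` of `f`. -/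
def cylinder {E : Type*} [NormedAddCommGroup E] (T : EReal) (b : ℝ) : Set (ℝ × E) :=
  {p | ((|p.1| : ℝ) : EReal) < T ∧ ‖p.2‖ < b}

theorem isOpen_cylinder {E : Type*} [NormedAddCommGroup E] (T : EReal) (b : ℝ) :
    IsOpen (cylinder T b : Set (ℝ × E)) :=
  (isOpen_lt (continuous_coe_real_ereal.comp continuous_fst.abs) continuous_const).inter
    (isOpen_lt continuous_snd.norm continuous_const)

section ODE

variable {E : Type*} [NormedAddCommGroup E] [NormedSpace ℝ E]

def IsSolutionOn (f : ℝ → E → E) (U : Set (ℝ × E)) (φ : ℝ → E) (s : Set ℝ) : Prop :=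
  ∀ t ∈ s, (t, φ t) ∈ U ∧ HasDerivWithinAt φ (f t (φ t)) s t

namespace IsSolutionOn

variable {f : ℝ → E → E} {U : Set (ℝ × E)} {φ φ₁ φ₂ : ℝ → E} {s s' : Set ℝ} {a m d t : ℝ}

theorem mono (h : IsSolutionOn f U φ s) (hs : s' ⊆ s) : IsSolutionOn f U φ s' :=
  fun t ht => ⟨(h t (hs ht)).1, (h t (hs ht)).2.mono hs⟩

theorem continuousOn (h : IsSolutionOn f U φ s) : ContinuousOn φ s :=
  fun t ht => (h t ht).2.continuousWithinAt

theorem hasDerivWithinAt_Ici (h : IsSolutionOn f U φ s) (ht : t ∈ s) (hs : s ∈ 𝓝[≥] t) :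
    HasDerivWithinAt φ (f t (φ t)) (Ici t) t :=
  (h t ht).2.mono_of_mem_nhdsWithin hs

theorem congr (h : IsSolutionOn f U φ s) (heq : EqOn φ₁ φ s) : IsSolutionOn f U φ₁ s := by
  intro t ht
  rw [heq ht]
  exact ⟨(h t ht).1, (h t ht).2.congr heq (heq ht)⟩

theorem union (h : IsSolutionOn f U φ s) (h' : IsSolutionOn f U φ s') (hs : IsClosed s)
    (hs' : IsClosed s') : IsSolutionOn f U φ (s ∪ s') := by
  -- at a point outside a closed set, a derivative within that set is vacuous
  have hderiv : ∀ u, IsClosed u → IsSolutionOn f U φ u →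
      ∀ t, HasDerivWithinAt φ (f t (φ t)) u t := fun u hu h t => by
    by_cases ht : t ∈ u
    · exact (h t ht).2
    · exact HasFDerivWithinAt.of_notMem_closure (by rwa [hu.closure_eq])
  exact fun t ht => ⟨ht.elim (fun ht => (h t ht).1) (fun ht => (h' t ht).1),
    (hderiv s hs h t).union (hderiv s' hs' h' t)⟩

theorem of_forall_mem_nhdsWithin (h : ∀ t ∈ s, ∃ u ∈ 𝓝[s] t, IsSolutionOn f U φ u) :
    IsSolutionOn f U φ s := by
  intro t ht
  obtain ⟨u, hu, hφ⟩ := h t ht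
  have := hφ t (mem_of_mem_nhdsWithin ht hu)
  exact ⟨this.1, this.2.mono_of_mem_nhdsWithin hu⟩

theorem ite_Icc (h₁ : IsSolutionOn f U φ₁ (Icc a m)) (h₂ : IsSolutionOn f U φ₂ (Icc m d))
    (hm : φ₁ m = φ₂ m) (ham : a ≤ m) (hmd : m ≤ d) :
    IsSolutionOn f U (fun t => if t ≤ m then φ₁ t else φ₂ t) (Icc a d) := by
  rw [← Icc_union_Icc_eq_Icc ham hmd]
  refine (h₁.congr fun t ht => if_pos ht.2).union (h₂.congr fun t ht => ?_) isClosed_Icc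
    isClosed_Icc
  rcases ht.1.eq_or_lt with rfl | hlt
  · exact (if_pos le_rfl).trans hm
  · exact if_neg hlt.not_ge

theorem eqOn (hf : LipschitzInSndOnCompacts f U) (h₁ : IsSolutionOn f U φ₁ (Icc a d))
    (h₂ : IsSolutionOn f U φ₂ (Icc a d)) (ha : φ₁ a = φ₂ a) : EqOn φ₁ φ₂ (Icc a d) := by
  obtain ⟨C, hC⟩ := hf.exists_forall_norm_sub_le isCompact_Icc h₁.continuousOn h₂.continuousOn
    (fun t ht => (h₁ t ht).1) (fun t ht => (h₂ t ht).1)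
  refine ODE_solution_unique_of_mem_Icc_right (v := f) (s := fun t => {φ₁ t, φ₂ t})
    (K := C.toNNReal) (fun t ht => ?_) h₁.continuousOn
    (fun t ht => h₁.hasDerivWithinAt_Ici (Ico_subset_Icc_self ht) (Icc_mem_nhdsGE_of_mem ht))
    (fun t _ => mem_insert _ _) h₂.continuousOn
    (fun t ht => h₂.hasDerivWithinAt_Ici (Ico_subset_Icc_self ht) (Icc_mem_nhdsGE_of_mem ht))
    (fun t _ => mem_insert_of_mem _ rfl) ha
  have hle := (hC t (Ico_subset_Icc_self ht)).trans
    (mul_le_mul_of_nonneg_right (Real.le_coe_toNNReal C) (norm_nonneg _))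
  rw [lipschitzOnWith_iff_norm_sub_le]
  rintro y (rfl | rfl) y' (rfl | rfl)
  · simp
  · exact hle
  · rwa [norm_sub_rev, norm_sub_rev (φ₂ t)]
  · simp

end IsSolutionOn

section Continuation

variable {f : ℝ → E → E} {U : Set (ℝ × E)}

theorem exists_isSolutionOn_Ico_of_forall_lt {a σ : ℝ} {x : E}
    (hlip : LipschitzInSndOnCompacts f U) (haσ : a < σ)
    (h : ∀ c < σ, ∃ φ : ℝ → E, φ a = x ∧ IsSolutionOn f U φ (Icc a c)) :
    ∃ φ : ℝ → E, φ a = x ∧ IsSolutionOn f U φ (Ico a σ) := by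
  choose! φ hφa hφ using h
  have heq : ∀ c < σ, ∀ c' < σ, EqOn (φ c) (φ c') (Icc a (min c c')) := fun c hc c' hc' =>
    ((hφ c hc).mono (Icc_subset_Icc_right (min_le_left _ _))).eqOn hlip
      ((hφ c' hc').mono (Icc_subset_Icc_right (min_le_right _ _)))
      ((hφa c hc).trans (hφa c' hc').symm)
  have hΦ : ∀ c < σ, EqOn (fun t => φ ((t + σ) / 2) t) (φ c) (Icc a c) := fun c hc t ht =>
    heq _ (by linarith [ht.2]) c hc ⟨ht.1, le_min (by linarith [ht.2]) ht.2⟩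
  refine ⟨fun t => φ ((t + σ) / 2) t, hφa _ (by linarith), .of_forall_mem_nhdsWithin fun t ht => ?_⟩
  have htc : t < (t + σ) / 2 := by linarith [ht.2]
  exact ⟨Icc a ((t + σ) / 2),
    mem_nhdsWithin.2 ⟨Iio _, isOpen_Iio, htc, fun z hz => ⟨hz.2.1, hz.1.le⟩⟩,
    (hφ _ (by linarith [ht.2])).congr (hΦ _ (by linarith [ht.2]))⟩

theorem exists_isSolutionOn_Ico_of_forall_extend {a β : ℝ} {x : E}
    (hlip : LipschitzInSndOnCompacts f U) (haβ : a < β)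
    (h₀ : ∃ c > a, ∃ φ : ℝ → E, φ a = x ∧ IsSolutionOn f U φ (Icc a c))
    (hext : ∀ c ∈ Ioo a β, ∀ φ : ℝ → E, φ a = x → IsSolutionOn f U φ (Ico a c) →
      ∃ d > c, ∃ Φ : ℝ → E, Φ a = x ∧ IsSolutionOn f U Φ (Icc a d)) :
    ∃ φ : ℝ → E, φ a = x ∧ IsSolutionOn f U φ (Ico a β) := by
  set S := {c | c < β ∧ ∃ φ : ℝ → E, φ a = x ∧ IsSolutionOn f U φ (Icc a c)}
  have hS : ∀ c d, (∃ φ : ℝ → E, φ a = x ∧ IsSolutionOn f U φ (Icc a c)) → d < β →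
      min c d ∈ S := fun c d ⟨φ, hφa, hφ⟩ hd =>
    ⟨min_lt_of_right_lt hd, φ, hφa, hφ.mono (Icc_subset_Icc_right (min_le_left c d))⟩
  obtain ⟨c₀, hc₀, hP₀⟩ := h₀
  have hc₁ := hS c₀ ((a + β) / 2) hP₀ (by linarith)
  have hbdd : BddAbove S := ⟨β, fun c hc => hc.1.le⟩
  have haσ : a < sSup S := (lt_min hc₀ (by linarith)).trans_le (le_csSup hbdd hc₁)
  obtain ⟨φ, hφa, hφ⟩ := exists_isSolutionOn_Ico_of_forall_lt hlip haσ fun c hc => by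
    obtain ⟨c', ⟨-, φ, hφa, hφ⟩, hcc'⟩ := exists_lt_of_lt_csSup ⟨_, hc₁⟩ hc
    exact ⟨φ, hφa, hφ.mono (Icc_subset_Icc_right hcc'.le)⟩
  rcases (csSup_le ⟨_, hc₁⟩ fun c hc => hc.1.le : sSup S ≤ β).lt_or_eq with hσβ | hσβ
  · obtain ⟨d, hd, hPd⟩ := hext _ ⟨haσ, hσβ⟩ φ hφa hφ
    exact absurd (le_csSup hbdd (hS d ((sSup S + β) / 2) hPd (by linarith)))
      (not_le.2 (lt_min hd (by linarith)))
  · exact ⟨φ, hφa, hσβ ▸ hφ⟩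

end Continuation

theorem norm_le_of_norm_deriv_right_le_add_mul_abs {φ φ' : ℝ → E} {ψ ψ' : ℝ → ℝ} {a d C : ℝ}
    (hφ : ContinuousOn φ (Icc a d)) (hφ' : ∀ t ∈ Ico a d, HasDerivWithinAt φ (φ' t) (Ici t) t)
    (hψ : ContinuousOn ψ (Icc a d)) (hψ' : ∀ t ∈ Ico a d, HasDerivWithinAt ψ (ψ' t) (Ici t) t)
    (ha : ‖φ a‖ ≤ ψ a) (bound : ∀ t ∈ Ico a d, ‖φ' t‖ ≤ ψ' t + C * |‖φ t‖ - ψ t|) :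
    ∀ t ∈ Icc a d, ‖φ t‖ ≤ ψ t := by
  intro t ht
  set K := max C 0 + 1
  have hexp : ∀ s, HasDerivAt (fun s => exp (K * (s - a))) (K * exp (K * (s - a))) s := fun s => by
    simpa [mul_comm] using (((hasDerivAt_id s).sub_const a).const_mul K).exp
  -- `‖φ‖` can never touch the fence `ψ + ε exp (K (· - a))`
  refine le_of_forall_pos_le_add fun η hη => ?_
  set ε := η / exp (K * (t - a))
  have hε : 0 < ε := by positivity
  have key := image_norm_le_of_norm_deriv_right_lt_deriv_boundary' hφ hφ'
    (B := fun s => ψ s + ε * exp (K * (s - a))) (B' := fun s => ψ' s + ε * (K * exp (K * (s - a))))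
    (ha.trans (le_add_of_nonneg_right (by positivity))) (hψ.add (by fun_prop))
    (fun s hs => (hψ' s hs).add ((hexp s).hasDerivWithinAt.const_mul ε)) (fun s hs hs_eq => ?_) ht
  · calc ‖φ t‖ ≤ ψ t + ε * exp (K * (t - a)) := key
      _ = ψ t + η := by rw [div_mul_cancel₀ _ (exp_pos _).ne']
  · have hpos : 0 < ε * exp (K * (s - a)) := by positivity
    calc ‖φ' s‖ ≤ ψ' s + C * |‖φ s‖ - ψ s| := bound s hs
      _ = ψ' s + C * (ε * exp (K * (s - a))) := by rw [hs_eq, add_sub_cancel_left, abs_of_pos hpos]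
      _ < ψ' s + ε * (K * exp (K * (s - a))) := by nlinarith [le_max_left C 0]

section Complete

variable [CompleteSpace E]

theorem IsPicardLindelof.exists_eq_forall_mem_Icc_mem_closedBall_hasDerivWithinAt
    {f : ℝ → E → E} {tmin tmax : ℝ} {t₀ : Icc tmin tmax} {x₀ x : E}
    {a r L K : ℝ≥0} (hf : IsPicardLindelof f t₀ x₀ a r L K) (hx : x ∈ closedBall x₀ r) :
    ∃ α : ℝ → E, α t₀ = x ∧ ∀ t ∈ Icc tmin tmax,
      α t ∈ closedBall x₀ a ∧ HasDerivWithinAt α (f t (α t)) (Icc tmin tmax) t := by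
  obtain ⟨α, hα⟩ := ODE.FunSpace.exists_isFixedPt_next hf hx
  refine ⟨α.compProj, by rw [ODE.FunSpace.compProj_val, ← hα, ODE.FunSpace.next_apply₀],
    fun t ht => ⟨α.compProj_mem_closedBall hf.mul_max_le, ?_⟩⟩
  refine ODE.hasDerivWithinAt_picard_Icc t₀.2 hf.continuousOn_uncurry
    α.continuous_compProj.continuousOn (fun _ _ => α.compProj_mem_closedBall hf.mul_max_le)
    x ht |>.congr_of_mem (fun t' ht' => ?_) ht
  nth_rw 1 [← hα]
  rw [ODE.FunSpace.compProj_of_mem ht', ODE.FunSpace.next_apply]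

variable {f : ℝ → E → E} {U : Set (ℝ × E)}

theorem exists_isSolutionOn_Icc_of_mem_nhds {t₀ : ℝ} {x₀ : E} (hU : U ∈ 𝓝 (t₀, x₀))
    (hf : ContinuousOn (uncurry f) U) (hlip : LipschitzInSndOnCompacts f U) :
    ∃ ε > 0, ∃ r > 0, ∀ s ∈ Icc (t₀ - ε) t₀, ∀ y ∈ closedBall x₀ r,
      ∃ φ : ℝ → E, φ s = y ∧ IsSolutionOn f U φ (Icc s (t₀ + ε)) := by
  obtain ⟨ρ, hρ, K, hK⟩ := hlip.exists_lipschitzOnWith_closedBall hU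
  set N := ‖f t₀ x₀‖ + 1
  have hN : 1 ≤ N := le_add_of_nonneg_left (norm_nonneg _)
  have hbound : ∀ᶠ p in 𝓝 (t₀, x₀), ‖uncurry f p‖ < N :=
    (hf.continuousAt hU).norm.eventually_lt continuousAt_const (lt_add_one _)
  obtain ⟨a, ha, haU⟩ := nhds_basis_closedBall.mem_iff.1 (inter_mem hU hbound)
  set A := min a ρ
  have hA : 0 < A := lt_min ha hρ
  have hbox : ∀ t ∈ closedBall t₀ A, ∀ y ∈ closedBall x₀ A, (t, y) ∈ U ∧ ‖f t y‖ < N :=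
    fun t ht y hy => haU (closedBall_subset_closedBall (min_le_left a ρ)
      (by rw [← closedBall_prod_same]; exact ⟨ht, hy⟩))
  -- over a time `2 ε` at speed `≤ N`, a solution starting in `closedBall x₀ (A / 2)` stays in
  -- `closedBall x₀ A`
  refine ⟨A / (4 * N), by positivity, A / 2, by positivity, fun s hs y hy => ?_⟩
  have hε : A / (4 * N) ≤ A / 4 := div_le_div_of_nonneg_left hA.le (by norm_num) (by linarith)
  have htime : Icc s (t₀ + A / (4 * N)) ⊆ closedBall t₀ A := fun t ht => by
    rw [Real.closedBall_eq_Icc]; constructor <;> linarith [hs.1, ht.1, ht.2]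
  have hpl : IsPicardLindelof f (tmin := s) (tmax := t₀ + A / (4 * N))
      ⟨s, le_rfl, by linarith [hs.2, show 0 < A / (4 * N) by positivity]⟩
      x₀ ⟨A, hA.le⟩ ⟨A / 2, by positivity⟩ ⟨N, by positivity⟩ K :=
    { lipschitzOnWith := fun t ht => (hK t (closedBall_subset_closedBall (min_le_right a ρ)
        (htime ht))).mono (closedBall_subset_closedBall (min_le_right a ρ))
      continuousOn := fun z hz => hf.comp (continuousOn_id.prodMk continuousOn_const)
        fun t ht => (hbox t (htime ht) z hz).1
      norm_le := fun t ht z hz => (hbox t (htime ht) z hz).2.le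
      mul_max_le := by
        simp only [sub_self]
        rw [max_eq_left (by linarith [hs.2, show 0 < A / (4 * N) by positivity])]
        have : t₀ + A / (4 * N) - s ≤ 2 * (A / (4 * N)) := by linarith [hs.1]
        calc N * (t₀ + A / (4 * N) - s) ≤ N * (2 * (A / (4 * N))) := by gcongr
          _ = A - A / 2 := by field_simp; ring }
  obtain ⟨φ, hφs, hφ⟩ := hpl.exists_eq_forall_mem_Icc_mem_closedBall_hasDerivWithinAt hy
  exact ⟨φ, hφs, fun t ht => ⟨(hbox t (htime ht) _ (hφ t ht).1).1, (hφ t ht).2⟩⟩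

theorem IsSolutionOn.exists_isSolutionOn_Icc_of_tendsto {φ : ℝ → E} {a c : ℝ} {L : E}
    (hf : ContinuousOn (uncurry f) U) (hlip : LipschitzInSndOnCompacts f U)
    (hφ : IsSolutionOn f U φ (Ico a c)) (hac : a < c) (hL : Tendsto φ (𝓝[<] c) (𝓝 L))
    (hU : U ∈ 𝓝 (c, L)) : ∃ d > c, ∃ Φ : ℝ → E, Φ a = φ a ∧ IsSolutionOn f U Φ (Icc a d) := by
  obtain ⟨ε, hε, r, hr, hloc⟩ := exists_isSolutionOn_Icc_of_mem_nhds hU hf hlip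
  -- restart from a point `(s, φ s)` close enough to `(c, L)` to lie in the Picard–Lindelöf box
  obtain ⟨s, hsL, hs⟩ := ((hL.eventually (closedBall_mem_nhds L hr)).and
    (Ioo_mem_nhdsLT (max_lt hac (sub_lt_self c hε)))).exists
  have has : a ≤ s := (le_max_left _ _).trans hs.1.le
  obtain ⟨φ₂, hφ₂s, hφ₂⟩ := hloc s ⟨(le_max_right _ _).trans hs.1.le, hs.2.le⟩ (φ s) hsL
  exact ⟨c + ε, by linarith, _, if_pos has, (hφ.mono (Icc_subset_Ico_right hs.2)).ite_Icc hφ₂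
    hφ₂s.symm has (by linarith [hs.2])⟩

theorem exists_tendsto_nhdsLT_of_norm_deriv_le {φ φ' : ℝ → E} {ψ ψ' : ℝ → ℝ}
    {a c l : ℝ} (hac : a < c)
    (hφ : ContinuousOn φ (Ico a c)) (hφ' : ∀ t ∈ Ico a c, HasDerivWithinAt φ (φ' t) (Ici t) t)
    (hψ : ContinuousOn ψ (Ico a c)) (hψ' : ∀ t ∈ Ico a c, HasDerivWithinAt ψ (ψ' t) (Ici t) t)
    (hψl : Tendsto ψ (𝓝[<] c) (𝓝 l)) (bound : ∀ t ∈ Ico a c, ‖φ' t‖ ≤ ψ' t) :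
    ∃ L, Tendsto φ (𝓝[<] c) (𝓝 L) := by
  have hdist : ∀ s ∈ Ico a c, ∀ t ∈ Ico a c, s ≤ t → dist (φ s) (φ t) ≤ dist (ψ s) (ψ t) := by
    intro s hs t ht hst
    have hsub : Icc s t ⊆ Ico a c := Icc_subset_Ico hs.1 ht.2
    have := image_norm_le_of_norm_deriv_right_le_deriv_boundary'
      ((hφ.mono hsub).sub continuousOn_const)
      (fun τ hτ => (hφ' τ (hsub (Ico_subset_Icc_self hτ))).sub_const (φ s))
      (by simp) ((hψ.mono hsub).sub continuousOn_const)
      (fun τ hτ => (hψ' τ (hsub (Ico_subset_Icc_self hτ))).sub_const (ψ s))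
      (fun τ hτ => bound τ (hsub (Ico_subset_Icc_self hτ))) (right_mem_Icc.2 hst)
    rw [dist_comm, dist_eq_norm, Real.dist_eq, abs_sub_comm]
    exact this.trans (le_abs_self _)
  have hψC := (cauchy_map_iff.1 hψl.cauchy_map).2
  rw [tendsto_uniformity_iff_dist_tendsto_zero] at hψC
  refine cauchy_map_iff_exists_tendsto.1 (cauchy_map_iff.2 ⟨inferInstance,
    tendsto_uniformity_iff_dist_tendsto_zero.2
      (squeeze_zero' (.of_forall fun _ => dist_nonneg) ?_ hψC)⟩)
  have hI : Ico a c ∈ 𝓝[<] c := mem_of_superset (Ioo_mem_nhdsLT hac) Ioo_subset_Ico_self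
  filter_upwards [prod_mem_prod hI hI] with p hp
  rcases le_total p.1 p.2 with h | h
  · exact hdist _ hp.1 _ hp.2 h
  · rw [dist_comm, dist_comm (ψ _)]; exact hdist _ hp.2 _ hp.1 h

end Complete

section Majorant

variable {T : EReal} {a b β : ℝ} {f : ℝ → E → E} {g : ℝ → ℝ → ℝ} {ψ : ℝ → ℝ} {x : E}

theorem norm_le_of_isSolutionOn_cylinder (ha : a < 0)
    (hg : LipschitzInSndOnCompacts g {p : ℝ × ℝ | ((|p.1| : ℝ) : EReal) < T ∧ p.2 ∈ Ioo a b})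
    (hmaj : ∀ t : ℝ, ∀ y : E, ((|t| : ℝ) : EReal) < T → ‖y‖ < b → ‖f t y‖ ≤ g |t| ‖y‖)
    (hψ0 : ψ 0 = ‖x‖) (hψmem : ∀ t ∈ Ico 0 β, ψ t ∈ Ico 0 b)
    (hψ : ∀ t ∈ Ico 0 β, HasDerivWithinAt ψ (g t (ψ t)) (Ico 0 β) t)
    {φ : ℝ → E} {d : ℝ} (hdβ : d < β) (hφ0 : φ 0 = x)
    (hφ : IsSolutionOn f (cylinder T b) φ (Icc 0 d)) :
    ∀ t ∈ Icc 0 d, ‖φ t‖ ≤ ψ t := by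
  have hsub : Icc 0 d ⊆ Ico 0 β := Icc_subset_Ico_right hdβ
  have hψc : ContinuousOn ψ (Icc 0 d) := fun t ht =>
    (hψ t (hsub ht)).continuousWithinAt.mono hsub
  have hV : ∀ t ∈ Icc 0 d, ∀ z, 0 ≤ z → z < b →
      (t, z) ∈ {p : ℝ × ℝ | ((|p.1| : ℝ) : EReal) < T ∧ p.2 ∈ Ioo a b} :=
    fun t ht z hz hzb => ⟨(hφ t ht).1.1, ha.trans_le hz, hzb⟩
  obtain ⟨C, hC⟩ := hg.exists_forall_norm_sub_le isCompact_Icc hφ.continuousOn.norm hψc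
    (fun t ht => hV t ht _ (norm_nonneg _) (hφ t ht).1.2)
    (fun t ht => hV t ht _ (hψmem t (hsub ht)).1 (hψmem t (hsub ht)).2)
  refine norm_le_of_norm_deriv_right_le_add_mul_abs (C := C) hφ.continuousOn
    (fun t ht => hφ.hasDerivWithinAt_Ici (Ico_subset_Icc_self ht) (Icc_mem_nhdsGE_of_mem ht)) hψc
    (fun t ht => (hψ t (hsub (Ico_subset_Icc_self ht))).mono_of_mem_nhdsWithin
      (Ico_mem_nhdsGE_of_mem (hsub (Ico_subset_Icc_self ht))))
    (by rw [hφ0, hψ0]) fun t ht => ?_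
  obtain ⟨hT, hb⟩ := (hφ t (Ico_subset_Icc_self ht)).1
  have hft := hmaj t (φ t) hT hb
  have hgC := hC t (Ico_subset_Icc_self ht)
  rw [abs_of_nonneg ht.1] at hft
  rw [Real.norm_eq_abs, Real.norm_eq_abs] at hgC
  linarith [le_abs_self (g t ‖φ t‖ - g t (ψ t))]

theorem exists_tendsto_nhdsLT_of_isSolutionOn_cylinder [CompleteSpace E] (ha : a < 0)
    (hg : LipschitzInSndOnCompacts g {p : ℝ × ℝ | ((|p.1| : ℝ) : EReal) < T ∧ p.2 ∈ Ioo a b})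
    (hg_mono : ∀ t : ℝ, 0 ≤ t → ((t : ℝ) : EReal) < T →
      ∀ z z' : ℝ, 0 ≤ z → z ≤ z' → z' < b → g t z ≤ g t z')
    (hmaj : ∀ t : ℝ, ∀ y : E, ((|t| : ℝ) : EReal) < T → ‖y‖ < b → ‖f t y‖ ≤ g |t| ‖y‖)
    (hβT : (β : EReal) ≤ T) (hψ0 : ψ 0 = ‖x‖) (hψmem : ∀ t ∈ Ico 0 β, ψ t ∈ Ico 0 b)
    (hψ : ∀ t ∈ Ico 0 β, HasDerivWithinAt ψ (g t (ψ t)) (Ico 0 β) t)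
    {φ : ℝ → E} {c : ℝ} (hc : c ∈ Ioo 0 β) (hφ0 : φ 0 = x)
    (hφ : IsSolutionOn f (cylinder T b) φ (Ico 0 c)) :
    ∃ L, Tendsto φ (𝓝[<] c) (𝓝 L) ∧ (c, L) ∈ cylinder T b := by
  have hsub : Icc 0 c ⊆ Ico 0 β := Icc_subset_Ico_right hc.2
  have hφψ : ∀ t ∈ Ico 0 c, ‖φ t‖ ≤ ψ t := fun t ht =>
    norm_le_of_isSolutionOn_cylinder ha hg hmaj hψ0 hψmem hψ (ht.2.trans hc.2) hφ0
      (hφ.mono (Icc_subset_Ico_right ht.2)) t (right_mem_Icc.2 ht.1)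
  have hspeed : ∀ t ∈ Ico 0 c, ‖f t (φ t)‖ ≤ g t (ψ t) := fun t ht => by
    obtain ⟨hT, hb⟩ := (hφ t ht).1
    have hft := hmaj t (φ t) hT hb
    rw [abs_of_nonneg ht.1] at hT hft
    exact hft.trans (hg_mono t ht.1 hT _ _ (norm_nonneg _) (hφψ t ht)
      (hψmem t (hsub (Ico_subset_Icc_self ht))).2)
  have hψ' : ∀ t ∈ Ico 0 c, HasDerivWithinAt ψ (g t (ψ t)) (Ici t) t := fun t ht =>
    (hψ t (hsub (Ico_subset_Icc_self ht))).mono_of_mem_nhdsWithin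
      (Ico_mem_nhdsGE_of_mem (hsub (Ico_subset_Icc_self ht)))
  have hψc : Tendsto ψ (𝓝[<] c) (𝓝 (ψ c)) :=
    ((hψ c (hsub (right_mem_Icc.2 hc.1.le))).continuousWithinAt.tendsto).mono_left
      (nhdsWithin_le_of_mem (mem_of_superset (Ioo_mem_nhdsLT hc.1)
        fun t ht => ⟨ht.1.le, ht.2.trans hc.2⟩))
  obtain ⟨L, hL⟩ := exists_tendsto_nhdsLT_of_norm_deriv_le hc.1 hφ.continuousOn
    (fun t ht => hφ.hasDerivWithinAt_Ici ht (Ico_mem_nhdsGE_of_mem ht))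
    (fun t ht => (hψ t (hsub (Ico_subset_Icc_self ht))).continuousWithinAt.mono
      (Ico_subset_Ico_right hc.2.le)) hψ' hψc hspeed
  refine ⟨L, hL, ?_, ?_⟩
  · rw [abs_of_pos hc.1]
    exact (EReal.coe_lt_coe_iff.2 hc.2).trans_le hβT
  · exact (le_of_tendsto_of_tendsto hL.norm hψc (mem_of_superset (Ioo_mem_nhdsLT hc.1)
      fun t ht => hφψ t ⟨ht.1.le, ht.2⟩)).trans_lt (hψmem c ⟨hc.1.le, hc.2⟩).2

end Majorant

end ODE

theorem lifetime_comparison_right_sided_general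
    {E : Type*} [NormedAddCommGroup E] [NormedSpace ℝ E] [CompleteSpace E]
    (T : EReal) (hT : 0 < T) (a b : ℝ) (ha : a < 0)
    (f : ℝ → E → E) (g : ℝ → ℝ → ℝ)
    -- hypothesis (LC) for f :
    (hf_cont : ContinuousOn (fun p : ℝ × E => f p.1 p.2)
      {p : ℝ × E | ((|p.1| : ℝ) : EReal) < T ∧ ‖p.2‖ < b})
    (hf_lip : ∀ K : Set (ℝ × E), IsCompact K →
      K ⊆ {p : ℝ × E | ((|p.1| : ℝ) : EReal) < T ∧ ‖p.2‖ < b} →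
      ∃ C : ℝ, ∀ p ∈ K, ∀ q ∈ K, p.1 = q.1 →
        ‖f p.1 p.2 - f q.1 q.2‖ ≤ C * ‖p.2 - q.2‖)
    -- hypothesis (MJ) for g w.r.t. f :
    (hg_lip : ∀ K : Set (ℝ × ℝ), IsCompact K →
      K ⊆ {p : ℝ × ℝ | ((|p.1| : ℝ) : EReal) < T ∧ p.2 ∈ Ioo a b} →
      ∃ C : ℝ, ∀ p ∈ K, ∀ q ∈ K, p.1 = q.1 →
        |g p.1 p.2 - g q.1 q.2| ≤ C * |p.2 - q.2|)
    (hg_mono : ∀ t : ℝ, 0 ≤ t → ((t : ℝ) : EReal) < T →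
      ∀ z z' : ℝ, 0 ≤ z → z ≤ z' → z' < b → g t z ≤ g t z')
    (hmaj : ∀ t : ℝ, ∀ y : E, ((|t| : ℝ) : EReal) < T → ‖y‖ < b →
      ‖f t y‖ ≤ g |t| ‖y‖)
    -- the initial datum and the majorizing solution ψ on [0, β̃) :
    (x : E) (hx : ‖x‖ < b)
    (β' : ℝ) (hβ'0 : 0 < β') (hβ'T : (β' : EReal) ≤ T)
    (ψ : ℝ → ℝ) (hψ0 : ψ 0 = ‖x‖)
    (hψmem : ∀ t ∈ Ico (0 : ℝ) β', ψ t ∈ Ico (0 : ℝ) b)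
    (hψdiff : ∀ t ∈ Ico (0 : ℝ) β',
      HasDerivWithinAt ψ (g t (ψ t)) (Ico (0 : ℝ) β') t) :
    ∃ φ : ℝ → E, φ 0 = x ∧
      ∀ t ∈ Ico (0 : ℝ) β', ‖φ t‖ < b ∧
        HasDerivWithinAt φ (f t (φ t)) (Ico (0 : ℝ) β') t ∧
        ‖φ t‖ ≤ ψ t := by
  have hU : IsOpen (cylinder T b : Set (ℝ × E)) := isOpen_cylinder T b
  obtain ⟨ε, hε, r, hr, hloc⟩ :=
    exists_isSolutionOn_Icc_of_mem_nhds (t₀ := 0) (x₀ := x) (hU.mem_nhds ⟨by simpa using hT, hx⟩)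
      hf_cont hf_lip
  obtain ⟨φ₀, hφ₀0, hφ₀⟩ := hloc 0 ⟨by linarith, le_rfl⟩ x (mem_closedBall_self hr.le)
  obtain ⟨φ, hφ0, hφ⟩ := exists_isSolutionOn_Ico_of_forall_extend hf_lip hβ'0
    ⟨0 + ε, by linarith, φ₀, hφ₀0, hφ₀⟩ fun c hc φ hφ0 hφ => by
      obtain ⟨L, hL, hLU⟩ := exists_tendsto_nhdsLT_of_isSolutionOn_cylinder ha hg_lip hg_mono
        hmaj hβ'T hψ0 hψmem hψdiff hc hφ0 hφ
      obtain ⟨d, hd, Φ, hΦ0, hΦ⟩ :=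
        hφ.exists_isSolutionOn_Icc_of_tendsto hf_cont hf_lip hc.1 hL (hU.mem_nhds hLU)
      exact ⟨d, hd, Φ, hΦ0.trans hφ0, hΦ⟩
  exact ⟨φ, hφ0, fun t ht => ⟨(hφ t ht).1.2, (hφ t ht).2,
    norm_le_of_isSolutionOn_cylinder ha hg_lip hmaj hψ0 hψmem hψdiff ht.2 hφ0
      (hφ.mono (Icc_subset_Ico_right ht.2)) t (right_mem_Icc.2 ht.1)⟩⟩

/-- Mérigot's comparison theorem, right-sided version with initial
datum `x`:  `f` satisfies hypothesis (LC) on `Ω = {(t,y) : |t| < T, ‖y‖ < b}` and `g`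
satisfies hypothesis (MJ) w.r.t. `f` on `Ω̃ = (-T,T)×(a,b)`.  If `ψ` solves
`ψ' = g(t,ψ)`, `ψ(0) = ‖x‖` on `[0,β̃)` with values in `[0,b)`, then there is a
solution `φ` of `y' = f(t,y)`, `y(0) = x` on the whole of `[0,β̃)`, with
`‖φ(t)‖ ≤ ψ(t)` there. -/
theorem lifetime_comparison_right_sided
    {E : Type*} [NormedAddCommGroup E] [NormedSpace ℝ E] [CompleteSpace E]
    (T : EReal) (hT : 0 < T) (a b : ℝ) (ha : a < 0) (hb : 0 < b)
    (f : ℝ → E → E) (g : ℝ → ℝ → ℝ)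
    -- hypothesis (LC) for f :
    (hf_cont : ContinuousOn (fun p : ℝ × E => f p.1 p.2)
      {p : ℝ × E | ((|p.1| : ℝ) : EReal) < T ∧ ‖p.2‖ < b})
    (hf_lip : ∀ K : Set (ℝ × E), IsCompact K →
      K ⊆ {p : ℝ × E | ((|p.1| : ℝ) : EReal) < T ∧ ‖p.2‖ < b} →
      ∃ C : ℝ, ∀ p ∈ K, ∀ q ∈ K, p.1 = q.1 →
        ‖f p.1 p.2 - f q.1 q.2‖ ≤ C * ‖p.2 - q.2‖)
    -- hypothesis (MJ) for g w.r.t. f :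
    (hg_cont : ContinuousOn (fun p : ℝ × ℝ => g p.1 p.2)
      {p : ℝ × ℝ | ((|p.1| : ℝ) : EReal) < T ∧ p.2 ∈ Ioo a b})
    (hg_lip : ∀ K : Set (ℝ × ℝ), IsCompact K →
      K ⊆ {p : ℝ × ℝ | ((|p.1| : ℝ) : EReal) < T ∧ p.2 ∈ Ioo a b} →
      ∃ C : ℝ, ∀ p ∈ K, ∀ q ∈ K, p.1 = q.1 →
        |g p.1 p.2 - g q.1 q.2| ≤ C * |p.2 - q.2|)
    (hg_mono : ∀ t : ℝ, 0 ≤ t → ((t : ℝ) : EReal) < T →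
      ∀ z z' : ℝ, 0 ≤ z → z ≤ z' → z' < b → g t z ≤ g t z')
    (hmaj : ∀ t : ℝ, ∀ y : E, ((|t| : ℝ) : EReal) < T → ‖y‖ < b →
      ‖f t y‖ ≤ g |t| ‖y‖)
    -- the initial datum and the majorizing solution ψ on [0, β̃) :
    (x : E) (hx : ‖x‖ < b)
    (β' : ℝ) (hβ'0 : 0 < β') (hβ'T : (β' : EReal) ≤ T)
    (ψ : ℝ → ℝ) (hψ0 : ψ 0 = ‖x‖)
    (hψmem : ∀ t ∈ Ico (0 : ℝ) β', ψ t ∈ Ico (0 : ℝ) b)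
    (hψdiff : ∀ t ∈ Ico (0 : ℝ) β',
      HasDerivWithinAt ψ (g t (ψ t)) (Ico (0 : ℝ) β') t) :
    ∃ φ : ℝ → E, φ 0 = x ∧
      ∀ t ∈ Ico (0 : ℝ) β', ‖φ t‖ < b ∧
        HasDerivWithinAt φ (f t (φ t)) (Ico (0 : ℝ) β') t ∧
        ‖φ t‖ ≤ ψ t :=
  lifetime_comparison_right_sided_general T hT a b ha f g hf_cont hf_lip hg_lip hg_mono hmaj x hx β'
    hβ'0 hβ'T ψ hψ0 hψmem hψdiff
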